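/- arXiv:1312.0921 — 2 statements merged into one kernel-verified Lean document; each statement's English description precedes it below -/
import Mathlib

section
/- For every m ≥ 0, the integer 2 does not divide λ_0^(m,a) or λ_2^(m,a), but 2 divides λ_1^(m,a) and λ_i^(m,a) for all i with 3 ≤ i ≤ n. -/
/-- `QDvd d q` means the rational number `q` is `d` times an integer. -/
def QDvd (d : ℕ) (q : ℚ) : Prop := ∃ c : ℤ, q = (d : ℚ) * c

def Pseq (N : ℤ) : ℕ → ℤ
  | 0 => 1
  | 1 => 1
  | (m+2) => (2*N+2) * Pseq N (m+1) - Pseq N m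

lemma Pseq_step (N : ℤ) (m : ℕ) :
    Pseq N (m+2) = (2*N+2) * Pseq N (m+1) - Pseq N m := rfl

lemma Pseq_oddpair (N : ℤ) (m : ℕ) : Odd (Pseq N m) ∧ Odd (Pseq N (m+1)) := by
  induction m with
  | zero => constructor <;> · rw [Int.odd_iff]; rfl
  | succ u ih =>
    refine ⟨ih.2, ?_⟩
    have o := ih.1
    show Odd (Pseq N (u+2))
    rw [Int.odd_iff] at o ⊢
    have h2 : Pseq N (u+2) = 2*((N+1) * Pseq N (u+1)) - Pseq N u := by
      rw [Pseq_step]; ring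
    omega

lemma Pseq_odd (N : ℤ) (m : ℕ) : Odd (Pseq N m) := (Pseq_oddpair N m).1

lemma Pseq_pospair (N : ℤ) (hN : 0 ≤ N) (m : ℕ) :
    1 ≤ Pseq N m ∧ Pseq N m ≤ Pseq N (m+1) := by
  induction m with
  | zero => exact ⟨le_refl _, le_refl _⟩
  | succ u ih =>
    have h := Pseq_step N u
    constructor
    · linarith [ih.1, ih.2]
    · show Pseq N (u+1) ≤ Pseq N (u+2)
      nlinarith [ih.1, ih.2]

lemma Pseq_pos (N : ℤ) (hN : 0 ≤ N) (m : ℕ) : 1 ≤ Pseq N m :=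
  (Pseq_pospair N hN m).1

lemma Pseq_key (N : ℤ) (m : ℕ) :
    Pseq N (m+2) * Pseq N m = Pseq N (m+1) ^ 2 + 2 * N := by
  induction m with
  | zero => simp [Pseq_step, Pseq]; ring
  | succ u ih =>
    have h1 := Pseq_step N u
    have h2 := Pseq_step N (u+1)
    linear_combination Pseq N (u+1) * h2 - Pseq N (u+2) * h1 + ih

theorem lambda_parity
    (n a : ℕ) (hn : 4 ≤ n) (ha : a ≤ n - 2)
    (y : ℕ → ℕ)
    (hy0 : y 0 = 2)
    (hy : ∀ m, 1 ≤ m → y m = 1 + ∏ i ∈ Finset.range m, y i)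
    (k : ℕ → ℕ)
    (hk : Set.BijOn k (Set.Icc 3 n) (Set.Iic (n - 2) \ {a}))
    (L : ℕ → ℕ → ℚ)
    (hL00 : L 0 0 = 1)
    (hL01 : L 0 1 = 2 * ((y (n - 1) : ℚ) - 1) / (y a : ℚ))
    (hL02 : L 0 2 = 1)
    (hL0i : ∀ i, 3 ≤ i → i ≤ n → L 0 i = 2 * ((y (n - 1) : ℚ) - 1) / (y (k i) : ℚ))
    (hR0 : ∀ m, L (m + 1) 0 = L m 2)
    (hR1 : ∀ m, L (m + 1) 1 = L m 1)
    (hR2 : ∀ m, L (m + 1) 2 = (L m 1 + L m 2) ^ 2 / L m 0)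
    (hRi : ∀ m i, 3 ≤ i → i ≤ n → L (m + 1) i = L m i * (L m 1 + L m 2) / L m 0)
    : ∀ m, ¬ QDvd 2 (L m 0) ∧ ¬ QDvd 2 (L m 2) ∧
      QDvd 2 (L m 1) ∧ ∀ i, 3 ≤ i → i ≤ n → QDvd 2 (L m i) := by
  -- positivity of y
  have hypos : ∀ m, 0 < y m := by
    intro m
    cases m with
    | zero => rw [hy0]; norm_num
    | succ u => rw [hy u.succ (Nat.succ_le_succ (Nat.zero_le u))]; omega
  -- the product T
  set T : ℕ := ∏ i ∈ Finset.range (n-1), y i with hTdef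
  have hT : y (n-1) = 1 + T := hy (n-1) (by omega)
  have hdvd : ∀ j, j ≤ n - 2 → y j ∣ T := by
    intro j hj
    exact Finset.dvd_prod_of_mem y (Finset.mem_range.mpr (by omega))
  have hval : ∀ j, j ≤ n - 2 →
      2 * ((y (n-1) : ℚ) - 1) / (y j : ℚ) = 2 * ((T / y j : ℕ) : ℚ) := by
    intro j hj
    have hd := hdvd j hj
    have hz : (y j : ℚ) ≠ 0 := Nat.cast_ne_zero.mpr (hypos j).ne'
    have hq : ((T / y j : ℕ) : ℚ) * (y j : ℚ) = (T : ℚ) := by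
      rw [← Nat.cast_mul, Nat.div_mul_cancel hd]
    rw [hT, div_eq_iff hz]
    push_cast
    linear_combination (-2:ℚ) * hq
  -- the even integer c = L 0 1 = 2 * N
  set N : ℕ := T / y a with hNdef
  have hc : L 0 1 = 2 * (N : ℚ) := by rw [hL01, hval a ha]
  -- L m 1 is constant
  have hL1 : ∀ m, L m 1 = 2 * (N : ℚ) := by
    intro m
    induction m with
    | zero => exact hc
    | succ u ih => rw [hR1]; exact ih
  -- each L 0 i, 3 ≤ i ≤ n, is 2 * natural
  have hw : ∀ i, 3 ≤ i → i ≤ n → ∃ M : ℕ, L 0 i = 2 * (M : ℚ) := by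
    intro i h3 hin
    have hki : k i ∈ Set.Iic (n-2) \ ({a} : Set ℕ) := hk.mapsTo ⟨h3, hin⟩
    exact ⟨T / y (k i), by rw [hL0i i h3 hin, hval (k i) hki.1]⟩
  have hNnn : (0:ℤ) ≤ (N:ℤ) := Int.ofNat_nonneg N
  have hPpos := Pseq_pos (N:ℤ) hNnn
  have hPodd := Pseq_odd (N:ℤ)
  have hPkey := Pseq_key (N:ℤ)
  -- the main structural invariant
  have main : ∀ m, L m 0 = (Pseq (N:ℤ) m : ℚ)^2 ∧ L m 2 = (Pseq (N:ℤ) (m+1) : ℚ)^2 ∧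
      ∀ i, 3 ≤ i → i ≤ n →
        L m i = (Pseq (N:ℤ) m : ℚ) * (Pseq (N:ℤ) (m+1) : ℚ) * L 0 i := by
    intro m
    induction m with
    | zero =>
      refine ⟨?_, ?_, ?_⟩
      · rw [hL00]; norm_num [Pseq]
      · rw [hL02]; norm_num [Pseq]
      · intro i _ _; norm_num [Pseq]
    | succ u ih =>
      obtain ⟨h0, h2, hi⟩ := ih
      have hPu : (Pseq (N:ℤ) u : ℚ) ≠ 0 := by
        have h1 := hPpos u
        have h3 : Pseq (N:ℤ) u ≠ 0 := by omega
        exact_mod_cast h3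
      have hkeyq : (Pseq (N:ℤ) (u+2) : ℚ) * (Pseq (N:ℤ) u : ℚ)
          = (Pseq (N:ℤ) (u+1) : ℚ)^2 + 2 * (N : ℚ) := by
        exact_mod_cast congrArg (fun z : ℤ => (z : ℚ)) (hPkey u)
      have hsum : L u 1 + L u 2 = (Pseq (N:ℤ) (u+2) : ℚ) * (Pseq (N:ℤ) u : ℚ) := by
        rw [hL1, h2]; linear_combination -hkeyq
      refine ⟨?_, ?_, ?_⟩
      · rw [hR0]; exact h2
      · rw [hR2, hsum, h0]
        field_simp
      · intro i h3 hin
        rw [hRi u i h3 hin, hsum, h0, hi i h3 hin]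
        field_simp
  -- conclude
  intro m
  obtain ⟨h0, h2, hi⟩ := main m
  have notdvd : ∀ q : ℕ, ¬ QDvd 2 ((Pseq (N:ℤ) q : ℚ)^2) := by
    rintro q ⟨c, hcq⟩
    have h1 : (Pseq (N:ℤ) q)^2 = 2 * c := by exact_mod_cast hcq
    have h3 : Pseq (N:ℤ) q ^ 2 = Pseq (N:ℤ) q * Pseq (N:ℤ) q := sq (Pseq (N:ℤ) q)
    rw [h3] at h1
    have h4 : (Pseq (N:ℤ) q * Pseq (N:ℤ) q) % 2 = 1 :=
      Int.odd_iff.mp ((hPodd q).mul (hPodd q))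
    omega
  refine ⟨by rw [h0]; exact notdvd m, by rw [h2]; exact notdvd (m+1),
    ⟨(N:ℤ), by rw [hL1]; push_cast; ring⟩, ?_⟩
  intro i h3 hin
  obtain ⟨M, hM⟩ := hw i h3 hin
  exact ⟨Pseq (N:ℤ) m * Pseq (N:ℤ) (m+1) * M, by rw [hi i h3 hin, hM]; push_cast; ring⟩
end

section
/- For every b ∈ {0,…,n-2} with b ≠ a, and every m ≥ 0, the Sylvester number y_b divides λ_2^(m,a) - 1. -/
/-!
Since `L m 1` stays equal to `A := λ_1^(0,a) ≥ 0`, the sequence `v m := λ_2^(m,a)` satisfies the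
Somos-type recurrence `v (m+1) · v (m-1) = (A + v m)²`; all its terms are positive, so this
linearises to `v (m+1) = (A² + 4A + 2) · v m - v (m-1) - 2A`. The Sylvester product `y_{n-1} - 1`
is divisible by `y_a · y_b`, so `A = 2 (y_{n-1} - 1) / y_a` is an integer multiple of `y_b`.
Modulo `y_b` the linear recurrence becomes `v (m+1) ≡ 2 v m - v (m-1)`, and since `v 0 = 1` and
`v 1 = (A + 1)² ≡ 1`, every term is `≡ 1`.
-/

theorem sylvester_pos {y : ℕ → ℕ} (hy0 : 0 < y 0)
    (hy : ∀ m, 1 ≤ m → y m = 1 + ∏ i ∈ Finset.range m, y i) (i : ℕ) : 0 < y i := by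
  rcases Nat.eq_zero_or_pos i with rfl | hi
  · exact hy0
  · rw [hy i hi]
    omega

theorem sylvester_eq_one_add_mul_mul {y : ℕ → ℕ}
    (hy : ∀ m, 1 ≤ m → y m = 1 + ∏ i ∈ Finset.range m, y i)
    {a b N : ℕ} (hab : a ≠ b) (ha : a < N) (hb : b < N) :
    ∃ M, y N = 1 + y a * y b * M := by
  have hsub : {a, b} ⊆ Finset.range N := by
    simp [Finset.insert_subset_iff, ha, hb]
  obtain ⟨M, hM⟩ := Finset.prod_dvd_prod_of_subset _ _ y hsub
  rw [Finset.prod_pair hab] at hM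
  exact ⟨M, by rw [hy N (by omega), hM]⟩

section Somos

variable {A : ℚ} {u v : ℕ → ℚ}
  (hu0 : u 0 = 1) (hv0 : v 0 = 1) (hu : ∀ m, u (m + 1) = v m)
  (hv : ∀ m, v (m + 1) = (A + v m) ^ 2 / u m)
include hu0 hv0 hu hv

theorem somos_pos (hA : 0 ≤ A) (m : ℕ) : 0 < u m ∧ 0 < v m := by
  induction m with
  | zero => simp [hu0, hv0]
  | succ m ih =>
    obtain ⟨hum, hvm⟩ := ih
    rw [hu, hv]
    have : 0 < A + v m := by linarith
    exact ⟨hvm, by positivity⟩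

theorem somos_linear (hA : 0 ≤ A) (m : ℕ) :
    v (m + 1) = (A ^ 2 + 4 * A + 2) * v m - u m - 2 * A := by
  induction m with
  | zero =>
    rw [hv, hu0, hv0]
    ring
  | succ m ih =>
    obtain ⟨hum, hvm⟩ := somos_pos hu0 hv0 hu hv hA m
    have hprod : v (m + 1) * u m = (A + v m) ^ 2 := by
      rw [hv, div_mul_cancel₀ _ hum.ne']
    rw [hv, hu, div_eq_iff hvm.ne']
    rw [ih] at hprod ⊢
    linear_combination -hprod

end Somos

theorem qdvd_sub_one_of_linear_recurrence {d : ℕ} {A : ℚ} (hA : QDvd d A) {u v : ℕ → ℚ}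
    (hu0 : u 0 = 1) (hv0 : v 0 = 1) (hu : ∀ m, u (m + 1) = v m)
    (hv : ∀ m, v (m + 1) = (A ^ 2 + 4 * A + 2) * v m - u m - 2 * A) (m : ℕ) :
    QDvd d (u m - 1) ∧ QDvd d (v m - 1) := by
  obtain ⟨α, rfl⟩ := hA
  induction m with
  | zero => exact ⟨⟨0, by simp [hu0]⟩, ⟨0, by simp [hv0]⟩⟩
  | succ m ih =>
    obtain ⟨⟨c, hc⟩, ⟨e, he⟩⟩ := ih
    refine ⟨⟨e, by rw [hu, he]⟩, ⟨α * (d * α + 4) * (1 + d * e) + 2 * e - c - 2 * α, ?_⟩⟩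
    rw [hv, sub_eq_iff_eq_add.mp hc, sub_eq_iff_eq_add.mp he]
    push_cast
    ring

theorem lambda_two_minus_one_divisible_general
    (n a : ℕ) (ha : a ≤ n - 2)
    (y : ℕ → ℕ)
    (hy0 : y 0 = 2)
    (hy : ∀ m, 1 ≤ m → y m = 1 + ∏ i ∈ Finset.range m, y i)
    (L : ℕ → ℕ → ℚ)
    (hL00 : L 0 0 = 1)
    (hL01 : L 0 1 = 2 * ((y (n - 1) : ℚ) - 1) / (y a : ℚ))
    (hL02 : L 0 2 = 1)
    (hR0 : ∀ m, L (m + 1) 0 = L m 2)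
    (hR1 : ∀ m, L (m + 1) 1 = L m 1)
    (hR2 : ∀ m, L (m + 1) 2 = (L m 1 + L m 2) ^ 2 / L m 0)
    : ∀ b, b ≤ n - 2 → b ≠ a → ∀ m, QDvd (y b) (L m 2 - 1) := by
  intro b hb hba m
  obtain ⟨M, hM⟩ := sylvester_eq_one_add_mul_mul hy (N := n - 1) hba.symm (by omega) (by omega)
  have hya : (y a : ℚ) ≠ 0 := by exact_mod_cast (sylvester_pos (by omega) hy a).ne'
  have hA : L 0 1 = y b * (2 * M : ℤ) := by
    rw [hL01, hM]
    push_cast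
    field_simp
    ring
  have hL1 : ∀ m, L m 1 = L 0 1 := fun m => by
    induction m with
    | zero => rfl
    | succ m ih => rw [hR1, ih]
  have hR2' : ∀ m, L (m + 1) 2 = (L 0 1 + L m 2) ^ 2 / L m 0 := fun m => by rw [hR2, hL1]
  have hA0 : 0 ≤ L 0 1 := by rw [hA]; push_cast; positivity
  exact (qdvd_sub_one_of_linear_recurrence (u := (L · 0)) ⟨2 * M, hA⟩ hL00 hL02 hR0
    (somos_linear (u := (L · 0)) (v := (L · 2)) hL00 hL02 hR0 hR2' hA0) m).2

theorem lambda_two_minus_one_divisible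
    (n a : ℕ) (hn : 4 ≤ n) (ha : a ≤ n - 2)
    (y : ℕ → ℕ)
    (hy0 : y 0 = 2)
    (hy : ∀ m, 1 ≤ m → y m = 1 + ∏ i ∈ Finset.range m, y i)
    (k : ℕ → ℕ)
    (hk : Set.BijOn k (Set.Icc 3 n) (Set.Iic (n - 2) \ {a}))
    (L : ℕ → ℕ → ℚ)
    (hL00 : L 0 0 = 1)
    (hL01 : L 0 1 = 2 * ((y (n - 1) : ℚ) - 1) / (y a : ℚ))
    (hL02 : L 0 2 = 1)
    (hL0i : ∀ i, 3 ≤ i → i ≤ n → L 0 i = 2 * ((y (n - 1) : ℚ) - 1) / (y (k i) : ℚ))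
    (hR0 : ∀ m, L (m + 1) 0 = L m 2)
    (hR1 : ∀ m, L (m + 1) 1 = L m 1)
    (hR2 : ∀ m, L (m + 1) 2 = (L m 1 + L m 2) ^ 2 / L m 0)
    (hRi : ∀ m i, 3 ≤ i → i ≤ n → L (m + 1) i = L m i * (L m 1 + L m 2) / L m 0)
    : ∀ b, b ≤ n - 2 → b ≠ a → ∀ m, QDvd (y b) (L m 2 - 1) :=
  lambda_two_minus_one_divisible_general n a ha y hy0 hy L hL00 hL01 hL02 hR0 hR1 hR2
end
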